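/- arXiv:1004.0323 — 2 statements merged into one kernel-verified Lean document; each statement's English description precedes it below -/
import Mathlib

section
/- Let f be a closed relation on a compact Hausdorff space X. Let C ⊆ X be a closed set satisfying 𝒢f(C) ∩ (𝒢f)⁻¹(C) ⊆ C, and let D ⊆ X be a closed set with C contained in the interior of D. Then 𝒢f ∩ (C × C) ⊆ 𝒢(f ∩ (D × D)), and moreover 𝒢f ∩ (C × C) ⊆ 𝒞(f ∩ (C × C)). -/
/-- The image of a set `A` under a relation `f ⊆ X × Y`. -/
def relImage {X Y : Type*} (f : Set (X × Y)) (A : Set X) : Set Y :=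
  {y | ∃ x ∈ A, (x, y) ∈ f}

/-- The reverse (inverse) relation of `f ⊆ X × Y`. -/
def relInv {X Y : Type*} (f : Set (X × Y)) : Set (Y × X) :=
  {p | (p.2, p.1) ∈ f}

/-- Composition of relations: `relComp g f = g ∘ f` (first `f`, then `g`). -/
def relComp {X Y Z : Type*} (g : Set (Y × Z)) (f : Set (X × Y)) : Set (X × Z) :=
  {p | ∃ y, (p.1, y) ∈ f ∧ (y, p.2) ∈ g}

/-- A relation on `X` is transitive. -/
def RelTrans {X : Type*} (f : Set (X × X)) : Prop :=
  ∀ x y z : X, (x, y) ∈ f → (y, z) ∈ f → (x, z) ∈ f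

/-- `gRel f` is the smallest closed transitive relation containing `f`:
the intersection of all closed transitive relations containing `f`. -/
def gRel {X : Type*} [TopologicalSpace X] (f : Set (X × X)) : Set (X × X) :=
  ⋂₀ {g : Set (X × X) | f ⊆ g ∧ IsClosed g ∧ RelTrans g}

/-- `relIterate F n` is the `n`-fold composition `Fⁿ` (with `F⁰` the diagonal). -/
def relIterate {X : Type*} (F : Set (X × X)) : ℕ → Set (X × X)
  | 0 => {p : X × X | p.1 = p.2}
  | n + 1 => relComp F (relIterate F n)

/-- The orbit relation `𝒪g = ⋃_{n ≥ 1} gⁿ`. -/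
def orbitRel {X : Type*} (g : Set (X × X)) : Set (X × X) :=
  ⋃ n ∈ Set.Ici (1 : ℕ), relIterate g n

/-- The chain relation `𝒞g = ⋂_V 𝒪(V ∘ g)`, where `V` ranges over the neighborhoods
of the diagonal of `X × X`. -/
def chainRel {X : Type*} [TopologicalSpace X] (g : Set (X × X)) : Set (X × X) :=
  ⋂ V ∈ nhdsSet (Set.diagonal X), orbitRel (relComp V g)


/-!
Write `G = 𝒢f`. Since `C` is unrevisited, the closed sets `G(C) ∪ C` and `G⁻¹(C) ∪ C` meet only
inside `interior D`, so they have open neighbourhoods `W₁`, `W₂` with `W₁ ∩ W₂ ⊆ D`. Saturating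
`W₁ᶜ` backwards and `W₂ᶜ` forwards under `G` gives closed sets `K₁`, `K₂` missing `C`, and
`𝒢(f ∩ D × D) ∪ {p ∈ G | p.1 ∈ K₁ ∨ p.2 ∈ K₂}` is a closed transitive relation containing `f`, so
it contains `G`; on `C × C` only its first piece survives.

For the chain relation, fix an entourage `V` and an open `U` with `U ○ U ○ U ⊆ V`. By the tube
lemma there is a closed neighbourhood `D'` of `C` on which every `f`-step is `U`-close to a step of
`h = f ∩ C × C`, and on which every `f`-step starting near `x` is `U`-close to an `h`-step
starting at `x`. By the first part, `(x, y) ∈ 𝒢(f ∩ D' × D')`, which lies in the closure of the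
`U`-pseudo-orbits of `f ∩ D' × D'`; shadowing such a pseudo-orbit by `h` gives a `V`-chain of `h`
from `x` to `y`.
-/

open SetRel Relation Uniformity Topology

section Relations
variable {X : Type*}

theorem relComp_eq_comp (g f : SetRel X X) : relComp g f = f ○ g := rfl

theorem mem_orbitRel_iff {g : SetRel X X} {a b : X} :
    (a, b) ∈ orbitRel g ↔ TransGen (· ~[g] ·) a b := by
  simp only [orbitRel, Set.mem_iUnion, Set.mem_Ici, exists_prop]
  constructor
  · rintro ⟨_ | n, hn, hab⟩
    · omega
    clear hn
    induction n generalizing b with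
    | zero => obtain ⟨c, hac : a = c, hcb⟩ := hab; exact hac ▸ .single hcb
    | succ n ih => obtain ⟨c, hac, hcb⟩ := hab; exact (ih hac).tail hcb
  · intro hab
    induction hab with
    | single hab => exact ⟨1, le_rfl, _, rfl, hab⟩
    | tail _ hbc ih => obtain ⟨n, hn, hab⟩ := ih; exact ⟨n + 1, by omega, _, hab, hbc⟩

theorem RelTrans.relInv {G : SetRel X X} (hG : RelTrans G) : RelTrans (relInv G) :=
  fun a b c hab hbc => hG c b a hbc hab

theorem RelTrans.relImage_union_relImage_subset {G : SetRel X X} (hG : RelTrans G) (M : Set X) :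
    relImage G (M ∪ relImage G M) ⊆ M ∪ relImage G M := by
  rintro b ⟨a, ha | ⟨m, hm, hma⟩, hab⟩
  · exact Or.inr ⟨a, ha, hab⟩
  · exact Or.inr ⟨m, hm, hG m a b hma hab⟩

theorem transGen_comp_of_tail {k t s W : SetRel X X} (ht : t ⊆ W) (hts : t ○ s ⊆ W) {a b c : X}
    (hab : TransGen (· ~[k ○ t] ·) a b) (hbc : b ~[s] c) : TransGen (· ~[k ○ W] ·) a c := by
  obtain ⟨b', hab', d, hb'd, hdb⟩ := TransGen.tail'_iff.1 hab
  have hmono : ∀ u v, u ~[k ○ t] v → u ~[k ○ W] v := fun _ _ => (comp_subset_comp subset_rfl ht ·)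
  exact TransGen.tail' (ReflTransGen.mono hmono _ _ hab') ⟨d, hb'd, hts ⟨b, hdb, hbc⟩⟩

theorem transGen_comp_of_shadowing {h k U V : SetRel X X} (hk : k ⊆ U ○ h ○ U)
    (hUV : U ○ (U ○ U) ⊆ V) {x a b c : X} (hstart : ∀ e, a ~[k] e → x ~[h ○ U] e)
    (hab : TransGen (· ~[k ○ U] ·) a b) (hbc : b ~[U] c) : TransGen (· ~[h ○ V] ·) x c := by
  induction hab generalizing c with
  | single hab =>
    obtain ⟨e, hae, heb⟩ := hab
    obtain ⟨d, hxd, hde⟩ := hstart e hae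
    exact .single ⟨d, hxd, hUV ⟨e, hde, _, heb, hbc⟩⟩
  | tail _ hbb' ih =>
    obtain ⟨e, hbe, heb'⟩ := hbb'
    obtain ⟨n, ⟨m, hbm, hmn⟩, hne⟩ := hk hbe
    exact (ih hbm).tail ⟨n, hmn, hUV ⟨e, hne, _, heb', hbc⟩⟩

end Relations

section Topology
variable {X : Type*} [TopologicalSpace X]

theorem IsOpen.comp_comp {U : SetRel X X} (hU : IsOpen U) (R : SetRel X X) :
    IsOpen (U ○ R ○ U) := by
  refine isOpen_iff_forall_mem_open.2 fun ⟨a, b⟩ ⟨c, ⟨d, had, hdc⟩, hcb⟩ =>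
    ⟨((·, d) ⁻¹' U) ×ˢ (Prod.mk c ⁻¹' U), ?_, ?_, had, hcb⟩
  · rintro ⟨a', b'⟩ ⟨ha', hb'⟩
    exact ⟨c, ⟨d, ha', hdc⟩, hb'⟩
  · exact (hU.preimage (by fun_prop)).prod (hU.preimage (by fun_prop))

theorem IsClosed.exists_nhdsSet_inter_prod_subset {Y : Type*} [TopologicalSpace Y]
    {f O : Set (X × Y)} (hf : IsClosed f) (hO : IsOpen O) {K : Set X}
    {L : Set Y} (hK : IsCompact K) (hL : IsCompact L) (h : f ∩ K ×ˢ L ⊆ O) :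
    ∃ u ∈ 𝓝ˢ K, ∃ v ∈ 𝓝ˢ L, f ∩ u ×ˢ v ⊆ O := by
  obtain ⟨u, v, hu, hv, hKu, hLv, huv⟩ := generalized_tube_lemma hK hL
    (hf.sdiff hO).isOpen_compl fun p hp hpf => hpf.2 (h ⟨hpf.1, hp⟩)
  exact ⟨u, hu.mem_nhdsSet.2 hKu, v, hv.mem_nhdsSet.2 hLv,
    fun p hp => by_contra fun hpO => huv hp.2 ⟨hp.1, hpO⟩⟩

theorem subset_gRel {f : SetRel X X} : f ⊆ gRel f :=
  Set.subset_sInter fun _ hg => hg.1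

theorem gRel_minimal {f g : SetRel X X} (hfg : f ⊆ g) (hg : IsClosed g) (hgt : RelTrans g) :
    gRel f ⊆ g :=
  Set.sInter_subset_of_mem ⟨hfg, hg, hgt⟩

theorem isClosed_gRel {f : SetRel X X} : IsClosed (gRel f) :=
  isClosed_sInter fun _ hg => hg.2.1

theorem relTrans_gRel {f : SetRel X X} : RelTrans (gRel f) :=
  fun a b c hab hbc g hg => hg.2.2 a b c (hab g hg) (hbc g hg)

theorem isClosed_relImage [CompactSpace X] {G : SetRel X X} {A : Set X} (hG : IsClosed G)
    (hA : IsClosed A) : IsClosed (relImage G A) := by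
  have : relImage G A = Prod.snd '' (G ∩ Prod.fst ⁻¹' A) := by
    ext b
    exact ⟨fun ⟨a, ha, hab⟩ => ⟨(a, b), ⟨hab, ha⟩, rfl⟩,
      fun ⟨_, ⟨hp, hpA⟩, hpb⟩ => hpb ▸ ⟨_, hpA, hp⟩⟩
  rw [this]
  exact isClosedMap_snd_of_compactSpace _ (hG.inter (hA.preimage continuous_fst))

theorem exists_isOpen_inter_subset [NormalSpace X] {A B D : Set X} (hA : IsClosed A)
    (hB : IsClosed B) (hAB : A ∩ B ⊆ interior D) :
    ∃ W₁ W₂ : Set X, IsOpen W₁ ∧ IsOpen W₂ ∧ A ⊆ W₁ ∧ B ⊆ W₂ ∧ W₁ ∩ W₂ ⊆ D := by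
  have hdisj : Disjoint (A \ interior D) (B \ interior D) :=
    Set.disjoint_left.2 fun a ha hb => ha.2 (hAB ⟨ha.1, hb.1⟩)
  obtain ⟨O₁, O₂, hO₁, hO₂, hAO, hBO, hO⟩ :=
    normal_separation (hA.sdiff isOpen_interior) (hB.sdiff isOpen_interior) hdisj
  refine ⟨interior D ∪ O₁, interior D ∪ O₂, isOpen_interior.union hO₁,
    isOpen_interior.union hO₂, Set.sdiff_subset_iff.1 hAO, Set.sdiff_subset_iff.1 hBO, ?_⟩
  rintro a ⟨ha₁ | ha₁, ha₂ | ha₂⟩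
  · exact interior_subset ha₁
  · exact interior_subset ha₁
  · exact interior_subset ha₂
  · exact (Set.disjoint_left.1 hO ha₁ ha₂).elim

theorem exists_isClosed_relImage_subset [CompactSpace X] {G : SetRel X X} (hGc : IsClosed G)
    (hG : RelTrans G) {W C : Set X} (hW : IsOpen W) (hCW : C ∪ relImage (relInv G) C ⊆ W) :
    ∃ K, IsClosed K ∧ relImage G K ⊆ K ∧ Wᶜ ⊆ K ∧ Disjoint K C := by
  refine ⟨Wᶜ ∪ relImage G Wᶜ, hW.isClosed_compl.union (isClosed_relImage hGc hW.isClosed_compl),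
    hG.relImage_union_relImage_subset _, Set.subset_union_left, Set.disjoint_left.2 ?_⟩
  rintro a (ha | ⟨m, hm, hma⟩) haC
  · exact ha (hCW (Or.inl haC))
  · exact hm (hCW (Or.inr ⟨a, haC, hma⟩))

theorem gRel_inter_compl_prod_compl_subset {f G : SetRel X X} {D K₁ K₂ : Set X}
    (hfG : f ⊆ G) (hGc : IsClosed G) (hG : RelTrans G) (hK₁ : IsClosed K₁) (hK₂ : IsClosed K₂)
    (hK₁G : relImage (relInv G) K₁ ⊆ K₁) (hK₂G : relImage G K₂ ⊆ K₂) (hD : Dᶜ ⊆ K₁ ∪ K₂) :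
    gRel f ∩ K₁ᶜ ×ˢ K₂ᶜ ⊆ gRel (f ∩ D ×ˢ D) := by
  set G' := gRel (f ∩ D ×ˢ D)
  have hG'G : G' ⊆ G := gRel_minimal (Set.inter_subset_left.trans hfG) hGc hG
  have back : ∀ {a b}, (a, b) ∈ G → b ∈ K₁ → a ∈ K₁ := fun hab hb => hK₁G ⟨_, hb, hab⟩
  have fwd : ∀ {a b}, (a, b) ∈ G → a ∈ K₂ → b ∈ K₂ := fun hab ha => hK₂G ⟨_, ha, hab⟩
  set g := G' ∪ G ∩ K₁ ×ˢ Set.univ ∪ G ∩ Set.univ ×ˢ K₂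
  have hgG : g ⊆ G := Set.union_subset (Set.union_subset hG'G Set.inter_subset_left)
    Set.inter_subset_left
  have hfg : f ⊆ g := by
    rintro ⟨a, b⟩ hab
    have habG := hfG hab
    by_cases habD : a ∈ D ∧ b ∈ D
    · exact Or.inl (Or.inl (subset_gRel ⟨hab, habD⟩))
    rcases not_and_or.1 habD with ha | hb
    · rcases hD ha with ha | ha
      · exact Or.inl (Or.inr ⟨habG, ha, trivial⟩)
      · exact Or.inr ⟨habG, trivial, fwd habG ha⟩
    · rcases hD hb with hb | hb
      · exact Or.inl (Or.inr ⟨habG, back habG hb, trivial⟩)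
      · exact Or.inr ⟨habG, trivial, hb⟩
  have hgc : IsClosed g := (isClosed_gRel.union (hGc.inter (hK₁.prod isClosed_univ))).union
    (hGc.inter (isClosed_univ.prod hK₂))
  have hgt : RelTrans g := by
    intro a b c hab hbc
    have hac : (a, c) ∈ G := hG a b c (hgG hab) (hgG hbc)
    rcases hab with (hab | ⟨-, haK, -⟩) | ⟨-, -, hbK⟩
    · rcases hbc with (hbc | ⟨-, hbK, -⟩) | ⟨-, -, hcK⟩
      · exact Or.inl (Or.inl (relTrans_gRel a b c hab hbc))
      · exact Or.inl (Or.inr ⟨hac, back (hG'G hab) hbK, trivial⟩)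
      · exact Or.inr ⟨hac, trivial, hcK⟩
    · exact Or.inl (Or.inr ⟨hac, haK, trivial⟩)
    · exact Or.inr ⟨hac, trivial, fwd (hgG hbc) hbK⟩
  rintro ⟨a, b⟩ ⟨hab, ha, hb⟩
  rcases gRel_minimal hfg hgc hgt hab with (h | h) | h
  · exact h
  · exact (ha h.2.1).elim
  · exact (hb h.2.2).elim

theorem gRel_inter_prod_subset_gRel_inter_prod [CompactSpace X] [NormalSpace X]
    {f : SetRel X X} {C D : Set X} (hC : IsClosed C)
    (hCun : relImage (gRel f) C ∩ relImage (relInv (gRel f)) C ⊆ C) (hCD : C ⊆ interior D) :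
    gRel f ∩ C ×ˢ C ⊆ gRel (f ∩ D ×ˢ D) := by
  have hGc : IsClosed (gRel f) := isClosed_gRel
  obtain ⟨W₁, W₂, hW₁, hW₂, hCW₁, hCW₂, hW⟩ := exists_isOpen_inter_subset
    (hC.union (isClosed_relImage hGc hC)) (hC.union (isClosed_relImage hGc.relInv hC))
    (by rw [← Set.union_inter_distrib_left]; exact Set.union_subset hCD (hCun.trans hCD))
  obtain ⟨K₁, hK₁, hK₁G, hWK₁, hK₁C⟩ :=
    exists_isClosed_relImage_subset hGc.relInv relTrans_gRel.relInv hW₁ hCW₁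
  obtain ⟨K₂, hK₂, hK₂G, hWK₂, hK₂C⟩ :=
    exists_isClosed_relImage_subset hGc relTrans_gRel hW₂ hCW₂
  have hDK : Dᶜ ⊆ K₁ ∪ K₂ := (Set.compl_subset_compl.2 hW).trans
    (Set.compl_inter W₁ W₂ ▸ Set.union_subset_union hWK₁ hWK₂)
  rintro p ⟨hp, hp₁, hp₂⟩
  exact gRel_inter_compl_prod_compl_subset subset_gRel hGc relTrans_gRel hK₁ hK₂ hK₁G hK₂G hDK
    ⟨hp, hK₁C.subset_compl_left hp₁, hK₂C.subset_compl_left hp₂⟩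

end Topology

section Uniform
variable {X : Type*} [UniformSpace X]

theorem gRel_subset_closure_orbitRel {k U : SetRel X X} (hU : U ∈ 𝓤 X) :
    gRel k ⊆ closure (orbitRel (relComp U k)) := by
  suffices gRel k ⊆ ⋂ W ∈ 𝓤 X, closure (orbitRel (relComp W k)) from
    this.trans (Set.biInter_subset_of_mem hU)
  refine gRel_minimal (fun p hp => Set.mem_iInter₂.2 fun W hW => subset_closure ?_)
    (isClosed_biInter fun _ _ => isClosed_closure) fun a b c hab hbc => ?_
  · exact mem_orbitRel_iff.2 (.single ⟨p.2, hp, refl_mem_uniformity hW⟩)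
  simp only [Set.mem_iInter₂, closure_eq_inter_uniformity, relComp_eq_comp] at hab hbc ⊢
  intro W hW d hd
  obtain ⟨t, ht, htW⟩ := comp_mem_uniformity_sets hW
  obtain ⟨e, he, hetd⟩ := comp_mem_uniformity_sets (Filter.inter_mem ht hd)
  have het : e ○ e ⊆ t := hetd.trans Set.inter_subset_left
  have hed : e ⊆ d :=
    (subset_comp_self_of_mem_uniformity he).trans (hetd.trans Set.inter_subset_right)
  obtain ⟨a₁, haa₁, b₁, hab₁, hb₁b⟩ := hab t ht e he
  obtain ⟨b₂, hbb₂, c₁, hbc₁, hc₁c⟩ := hbc t ht e he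
  rw [mem_orbitRel_iff] at hab₁ hbc₁
  have htW' : t ⊆ W := (subset_comp_self_of_mem_uniformity ht).trans htW
  refine ⟨a₁, hed haa₁, c₁, mem_orbitRel_iff.2 ?_, hed hc₁c⟩
  -- the last `t`-jump of the first pseudo-orbit absorbs the gap `b₁ ~[e ○ e] b₂`
  have hab₂ : TransGen (· ~[k ○ W] ·) a₁ b₂ :=
    transGen_comp_of_tail htW' ((comp_subset_comp subset_rfl het).trans htW) hab₁ ⟨b, hb₁b, hbb₂⟩
  exact hab₂.trans (TransGen.mono (fun _ _ => (comp_subset_comp subset_rfl htW' ·)) _ _ hbc₁)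

theorem transGen_comp_of_mem_gRel [CompactSpace X] {f : SetRel X X} {C : Set X}
    (hf : IsClosed f) (hC : IsClosed C)
    (hCun : relImage (gRel f) C ∩ relImage (relInv (gRel f)) C ⊆ C) {x y : X}
    (hxy : (x, y) ∈ gRel f) (hx : x ∈ C) (hy : y ∈ C) {V : SetRel X X} (hV : V ∈ 𝓤 X) :
    TransGen (· ~[(f ∩ C ×ˢ C) ○ V] ·) x y := by
  set h := f ∩ C ×ˢ C
  obtain ⟨t, ht, htV⟩ := comp3_mem_uniformity hV
  obtain ⟨U, ⟨hU, hUo⟩, hUt⟩ := uniformity_hasBasis_open.mem_iff.1 ht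
  have hUV : U ○ (U ○ U) ⊆ V :=
    (comp_subset_comp hUt (comp_subset_comp hUt hUt)).trans htV
  obtain ⟨u₁, hu₁, v₁, hv₁, hfuv₁⟩ := hf.exists_nhdsSet_inter_prod_subset (hUo.comp_comp h)
    hC.isCompact hC.isCompact fun p hp =>
      ⟨p.2, ⟨p.1, refl_mem_uniformity hU, hp⟩, refl_mem_uniformity hU⟩
  obtain ⟨N, hN, v₂, hv₂, hfNv₂⟩ := hf.exists_nhdsSet_inter_prod_subset
    ((hUo.relImage (t := h.image {x})).preimage continuous_snd) isCompact_singleton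
    hC.isCompact (by
      rintro ⟨_, b⟩ ⟨hab, rfl, hb⟩
      exact ⟨b, ⟨_, rfl, hab, hx, hb⟩, refl_mem_uniformity hU⟩)
  obtain ⟨D, hD, -, hDsub⟩ :=
    exists_mem_nhdsSet_isClosed_subset (Filter.inter_mem (Filter.inter_mem hu₁ hv₁) hv₂) hC
  set k := f ∩ D ×ˢ D
  have hk : k ⊆ U ○ h ○ U := fun ⟨_, _⟩ ⟨hab, ha, hb⟩ =>
    hfuv₁ ⟨hab, (hDsub ha).1.1, (hDsub hb).1.2⟩
  have hstart : ∀ a ∈ N, ∀ e, a ~[k] e → x ~[h ○ U] e := by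
    rintro a ha e ⟨hae, -, he⟩
    obtain ⟨d, ⟨_, rfl, hxd⟩, hde⟩ := hfNv₂ ⟨hae, ha, (hDsub he).2⟩
    exact ⟨d, hxd, hde⟩
  have hxyk : (x, y) ∈ gRel k := gRel_inter_prod_subset_gRel_inter_prod hC hCun
    (subset_interior_iff_mem_nhdsSet.2 hD) ⟨hxy, hx, hy⟩
  obtain ⟨d, hd, hdN⟩ := UniformSpace.mem_nhds_iff.1 (nhdsSet_singleton (x := x) ▸ hN)
  have hcl := gRel_subset_closure_orbitRel hU hxyk
  rw [closure_eq_inter_uniformity, Set.mem_iInter₂] at hcl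
  obtain ⟨x₁, hxx₁, y₁, hx₁y₁, hy₁y⟩ := hcl (d ∩ U) (Filter.inter_mem hd hU)
  exact transGen_comp_of_shadowing hk hUV (hstart x₁ (hdN hxx₁.1)) (mem_orbitRel_iff.1 hx₁y₁)
    hy₁y.2

end Uniform

theorem gRel_restrict_subset_of_unrevisited_general
    {X : Type*} [TopologicalSpace X] [CompactSpace X] [T2Space X]
    (f : Set (X × X)) (hf : IsClosed f)
    (C : Set X) (hC : IsClosed C)
    (hCun : relImage (gRel f) C ∩ relImage (relInv (gRel f)) C ⊆ C)
    (D : Set X) (hCD : C ⊆ interior D) :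
    gRel f ∩ C ×ˢ C ⊆ gRel (f ∩ D ×ˢ D) ∧
      gRel f ∩ C ×ˢ C ⊆ chainRel (f ∩ C ×ˢ C) := by
  refine ⟨gRel_inter_prod_subset_gRel_inter_prod hC hCun hCD, fun ⟨x, y⟩ ⟨hxy, hx, hy⟩ => ?_⟩
  let := uniformSpaceOfCompactR1 (γ := X)
  refine Set.mem_iInter₂.2 fun V hV => mem_orbitRel_iff.2 ?_
  exact transGen_comp_of_mem_gRel hf hC hCun hxy hx hy
    (nhdsSet_diagonal_eq_uniformity (α := X) ▸ hV)

/-- Let `f` be a closed relation on a compact Hausdorff space `X`,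
`C` a closed set with `𝒢f(C) ∩ 𝒢f⁻¹(C) ⊆ C`, and `D` closed with `C` contained in the
interior of `D`. Then `𝒢f ∩ (C × C) ⊆ 𝒢(f ∩ (D × D))` and
`𝒢f ∩ (C × C) ⊆ 𝒞(f ∩ (C × C))`. -/
theorem gRel_restrict_subset_of_unrevisited
    {X : Type*} [TopologicalSpace X] [CompactSpace X] [T2Space X]
    (f : Set (X × X)) (hf : IsClosed f)
    (C : Set X) (hC : IsClosed C)
    (hCun : relImage (gRel f) C ∩ relImage (relInv (gRel f)) C ⊆ C)
    (D : Set X) (hD : IsClosed D) (hCD : C ⊆ interior D) :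
    gRel f ∩ C ×ˢ C ⊆ gRel (f ∩ D ×ˢ D) ∧
      gRel f ∩ C ×ˢ C ⊆ chainRel (f ∩ C ×ˢ C) :=
  gRel_restrict_subset_of_unrevisited_general f hf C hC hCun D hCD
end

section
/- Let f be a continuous self-map of a compact Hausdorff space X and let x ∈ X satisfy (x,x) ∈ 𝒢f, where 𝒢f is computed for the graph of f. Set E = {y ∈ X | (x,y) ∈ 𝒢f and (y,x) ∈ 𝒢f}. Then E is a closed set with f(E) = E, and the restriction of f to E is chain transitive: 𝒞(graph(f) ∩ (E × E)) = E × E. -/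
/-! The class `E` is closed, and the decompositions `𝒢f = f ∪ 𝒢f ∘ f = f ∪ f ∘ 𝒢f` (valid because
`f ∪ 𝒢f ∘ f` and `f ∪ f ∘ 𝒢f` are closed and transitive) give `f(E) = E`.

For chain transitivity, call `(p, q) ∈ 𝒢f` interval-chainable if inside every open set containing
`p`, `q` and the `𝒢f`-interval `{w | (p, w), (w, q) ∈ 𝒢f}` there are arbitrarily fine `f`-chains
from `p` to `q`. This relation is transitive and contains `f`; it is closed because the interval
depends upper semicontinuously on `(p, q)` (compactness), so a chain of a nearby pair only needs its
endpoints moved. Hence it contains `𝒢f`. For `y, z ∈ E` the interval lies in `E`, and a fine chain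
inside a thin neighbourhood of `E` can be pushed onto `E` point by point, which gives
`(y, z) ∈ 𝒞(f|E)`. -/

open Set Filter Topology Uniformity

section Iterates

variable {X : Type*}

theorem relIterate_add {F : Set (X × X)} {a b c : X} {m n : ℕ}
    (hab : (a, b) ∈ relIterate F m) (hbc : (b, c) ∈ relIterate F n) :
    (a, c) ∈ relIterate F (m + n) := by
  induction n generalizing c with
  | zero => exact (show b = c from hbc) ▸ hab
  | succ n ih =>
    obtain ⟨d, hbd, hdc⟩ := hbc
    exact ⟨d, ih hbd, hdc⟩

theorem relIterate_map {F G : Set (X × X)} {e : X → X}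
    (h : ∀ a b, (a, b) ∈ F → (e a, e b) ∈ G) {a b : X} {n : ℕ}
    (hab : (a, b) ∈ relIterate F n) : (e a, e b) ∈ relIterate G n := by
  induction n generalizing b with
  | zero => exact congrArg e hab
  | succ n ih =>
    obtain ⟨c, hac, hcb⟩ := hab
    exact ⟨e c, ih hac, h c b hcb⟩

theorem fst_mem_of_mem_relIterate_succ {F : Set (X × X)} {A : Set X}
    (hF : ∀ p ∈ F, p.1 ∈ A) {a b : X} {n : ℕ} (hab : (a, b) ∈ relIterate F (n + 1)) :
    a ∈ A := by
  induction n generalizing b with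
  | zero =>
    obtain ⟨c, hac, hcb⟩ := hab
    exact (show a = c from hac) ▸ hF _ hcb
  | succ n ih =>
    obtain ⟨c, hac, -⟩ := hab
    exact ih hac

theorem subset_orbitRel (F : Set (X × X)) : F ⊆ orbitRel F :=
  fun p hp => mem_iUnion₂.2 ⟨1, mem_Ici.2 le_rfl, p.1, rfl, hp⟩

theorem relTrans_orbitRel (F : Set (X × X)) : RelTrans (orbitRel F) := by
  intro a b c hab hbc
  obtain ⟨m, hm, hab⟩ := mem_iUnion₂.1 hab
  obtain ⟨n, -, hbc⟩ := mem_iUnion₂.1 hbc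
  exact mem_iUnion₂.2 ⟨m + n, mem_Ici.2 (le_add_right hm), relIterate_add hab hbc⟩

theorem orbitRel_map {F G : Set (X × X)} {e : X → X}
    (h : ∀ a b, (a, b) ∈ F → (e a, e b) ∈ G) {a b : X} (hab : (a, b) ∈ orbitRel F) :
    (e a, e b) ∈ orbitRel G := by
  obtain ⟨n, hn, hab⟩ := mem_iUnion₂.1 hab
  exact mem_iUnion₂.2 ⟨n, hn, relIterate_map h hab⟩

theorem orbitRel_mono {F G : Set (X × X)} (h : F ⊆ G) : orbitRel F ⊆ orbitRel G :=
  fun _ hp => orbitRel_map (e := id) (fun _ _ hab => h hab) hp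

theorem fst_mem_of_mem_orbitRel {F : Set (X × X)} {A : Set X} (hF : ∀ p ∈ F, p.1 ∈ A)
    {p : X × X} (hp : p ∈ orbitRel F) : p.1 ∈ A := by
  obtain ⟨n, hn, hp⟩ := mem_iUnion₂.1 hp
  obtain ⟨n, rfl⟩ := Nat.exists_eq_add_of_le' hn
  exact fst_mem_of_mem_relIterate_succ hF hp

end Iterates

theorem chainRel_subset_prod {X : Type*} [TopologicalSpace X] [T1Space X]
    {g : Set (X × X)} {A B : Set X} (hB : IsClosed B) (hg : g ⊆ A ×ˢ B) :
    chainRel g ⊆ A ×ˢ B := by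
  rintro ⟨a, b⟩ h
  have hV : ∀ V ∈ 𝓝ˢ (diagonal X), (a, b) ∈ orbitRel (relComp V g) := mem_iInter₂.1 h
  have hfst : ∀ p ∈ relComp (univ : Set (X × X)) g, p.1 ∈ A := by
    rintro p ⟨y, hy, -⟩
    exact (hg hy).1
  refine ⟨fst_mem_of_mem_orbitRel hfst (hV univ univ_mem), ?_⟩
  by_contra hb
  have hdiag : (B ×ˢ {b})ᶜ ∈ 𝓝ˢ (diagonal X) := by
    refine (hB.prod isClosed_singleton).isOpen_compl.mem_nhdsSet.2 ?_
    rintro ⟨c, c'⟩ (rfl : c = c') ⟨hc, rfl : c = b⟩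
    exact hb hc
  obtain ⟨n, hn, hab⟩ := mem_iUnion₂.1 (hV _ hdiag)
  obtain ⟨n, rfl⟩ := Nat.exists_eq_add_of_le' hn
  obtain ⟨c, -, y, hcy, hyb⟩ := hab
  exact hyb (mk_mem_prod (hg hcy).2 rfl)

section GRel

variable {X : Type*} [TopologicalSpace X]

theorem gRel_subset {F R : Set (X × X)} (hFR : F ⊆ R) (hR : IsClosed R) (hRt : RelTrans R) :
    gRel F ⊆ R :=
  sInter_subset_of_mem ⟨hFR, hR, hRt⟩

theorem subset_gRel_s3 (F : Set (X × X)) : F ⊆ gRel F :=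
  fun _ hp => mem_sInter.2 fun _ hR => hR.1 hp

theorem isClosed_gRel_s3 (F : Set (X × X)) : IsClosed (gRel F) :=
  isClosed_sInter fun _ hR => hR.2.1

theorem relTrans_gRel_s3 (F : Set (X × X)) : RelTrans (gRel F) := fun a b c hab hbc =>
  mem_sInter.2 fun R hR => hR.2.2 a b c (mem_sInter.1 hab R hR) (mem_sInter.1 hbc R hR)

variable [CompactSpace X] [T2Space X] {F : Set (X × X)}

theorem isClosed_relComp {G : Set (X × X)} (hF : IsClosed F) (hG : IsClosed G) :
    IsClosed (relComp G F) := by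
  have hchains : IsClosed {t : X × X × X | (t.1, t.2.1) ∈ F ∧ (t.2.1, t.2.2) ∈ G} :=
    (hF.preimage (by fun_prop)).inter (hG.preimage (by fun_prop))
  have himage : relComp G F =
      (fun t : X × X × X => (t.1, t.2.2)) '' {t | (t.1, t.2.1) ∈ F ∧ (t.2.1, t.2.2) ∈ G} := by
    ext ⟨a, c⟩
    exact ⟨fun ⟨b, hab, hbc⟩ => ⟨(a, b, c), ⟨hab, hbc⟩, rfl⟩,
      fun ⟨_, ht, heq⟩ => heq ▸ ⟨_, ht⟩⟩
  rw [himage]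
  exact (hchains.isCompact.image (by fun_prop)).isClosed

theorem gRel_subset_union_gRel_comp (hF : IsClosed F) : gRel F ⊆ F ∪ relComp (gRel F) F := by
  have hsub : F ∪ relComp (gRel F) F ⊆ gRel F := union_subset (subset_gRel_s3 F)
    fun _ ⟨y, hay, hyb⟩ => relTrans_gRel_s3 F _ y _ (subset_gRel_s3 F hay) hyb
  refine gRel_subset subset_union_left (hF.union (isClosed_relComp hF (isClosed_gRel_s3 F))) ?_
  rintro a b c hab hbc
  right
  rcases hab with hab | ⟨y, hay, hyb⟩
  · exact ⟨b, hab, hsub hbc⟩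
  · exact ⟨y, hay, relTrans_gRel_s3 F _ b _ hyb (hsub hbc)⟩

theorem gRel_subset_union_comp_gRel (hF : IsClosed F) : gRel F ⊆ F ∪ relComp F (gRel F) := by
  have hsub : F ∪ relComp F (gRel F) ⊆ gRel F := union_subset (subset_gRel_s3 F)
    fun _ ⟨y, hay, hyb⟩ => relTrans_gRel_s3 F _ y _ hay (subset_gRel_s3 F hyb)
  refine gRel_subset subset_union_left (hF.union (isClosed_relComp (isClosed_gRel_s3 F) hF)) ?_
  rintro a b c hab hbc
  right
  rcases hbc with hbc | ⟨y, hby, hyc⟩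
  · exact ⟨b, hsub hab, hbc⟩
  · exact ⟨y, relTrans_gRel_s3 F _ b _ (hsub hab) hby, hyc⟩

end GRel

section Intervals

variable {X : Type*} {R : Set (X × X)}

def relInterval (R : Set (X × X)) (p q : X) : Set X := {w | (p, w) ∈ R ∧ (w, q) ∈ R}

theorem relInterval_subset_right (hR : RelTrans R) {p q r : X} (hqr : (q, r) ∈ R) :
    relInterval R p q ⊆ relInterval R p r :=
  fun w ⟨hpw, hwq⟩ => ⟨hpw, hR w q r hwq hqr⟩

theorem relInterval_subset_left (hR : RelTrans R) {p q r : X} (hpq : (p, q) ∈ R) :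
    relInterval R q r ⊆ relInterval R p r :=
  fun w ⟨hqw, hwr⟩ => ⟨hR p q w hpq hqw, hwr⟩

theorem eventually_relInterval_subset [TopologicalSpace X] [CompactSpace X] (hR : IsClosed R)
    {O : Set X} (hO : IsOpen O) {p q : X} (h : relInterval R p q ⊆ O) :
    ∀ᶠ r in 𝓝 (p, q), relInterval R r.1 r.2 ⊆ O := by
  set T : Set ((X × X) × X) := {t | (t.1.1, t.2) ∈ R ∧ (t.2, t.1.2) ∈ R ∧ t.2 ∉ O}
  have hT : IsClosed T :=
    (hR.preimage (by fun_prop)).inter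
      ((hR.preimage (by fun_prop)).inter (hO.isClosed_compl.preimage continuous_snd))
  have hpq : (p, q) ∉ Prod.fst '' T := by
    rintro ⟨⟨_, w⟩, ⟨hpw, hwq, hwO⟩, rfl⟩
    exact hwO (h ⟨hpw, hwq⟩)
  filter_upwards [(isClosedMap_fst_of_compactSpace _ hT).isOpen_compl.mem_nhds hpq] with r hr w hw
  by_contra hwO
  exact hr ⟨(r, w), ⟨hw.1, hw.2, hwO⟩, rfl⟩

end Intervals

section GRelClass

variable {X : Type*} [TopologicalSpace X]

def graphRel (f : X → X) : Set (X × X) := {p | p.2 = f p.1}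

def gRelClass (F : Set (X × X)) (x : X) : Set X := {y | (x, y) ∈ gRel F ∧ (y, x) ∈ gRel F}

theorem isClosed_gRelClass (F : Set (X × X)) (x : X) : IsClosed (gRelClass F x) :=
  ((isClosed_gRel_s3 F).preimage (by fun_prop)).inter ((isClosed_gRel_s3 F).preimage (by fun_prop))

theorem relInterval_subset_gRelClass {F : Set (X × X)} {x y z : X} (hy : y ∈ gRelClass F x)
    (hz : z ∈ gRelClass F x) : relInterval (gRel F) y z ⊆ gRelClass F x :=
  fun _ ⟨hyw, hwz⟩ => ⟨relTrans_gRel_s3 F _ y _ hy.1 hyw, relTrans_gRel_s3 F _ z _ hwz hz.2⟩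

theorem isClosed_graphRel [T2Space X] {f : X → X} (hf : Continuous f) :
    IsClosed (graphRel f) :=
  isClosed_eq continuous_snd (hf.comp continuous_fst)

variable [CompactSpace X] [T2Space X] {f : X → X} {x : X}

theorem mapsTo_gRelClass (hf : Continuous f) (hx : (x, x) ∈ gRel (graphRel f)) :
    MapsTo f (gRelClass (graphRel f) x) (gRelClass (graphRel f) x) := by
  rintro y ⟨hxy, hyx⟩
  refine ⟨relTrans_gRel_s3 _ _ y _ hxy (subset_gRel_s3 _ rfl), ?_⟩
  rcases gRel_subset_union_gRel_comp (isClosed_graphRel hf) hyx with hxfy | ⟨w, hwfy, hwx⟩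
  · exact (show x = f y from hxfy) ▸ hx
  · exact (show w = f y from hwfy) ▸ hwx

theorem surjOn_gRelClass (hf : Continuous f) (hx : (x, x) ∈ gRel (graphRel f)) :
    SurjOn f (gRelClass (graphRel f) x) (gRelClass (graphRel f) x) := by
  rintro y ⟨hxy, hyx⟩
  rcases gRel_subset_union_comp_gRel (isClosed_graphRel hf) hxy with hyfx | ⟨c, hxc, hyfc⟩
  · exact ⟨x, ⟨hx, hx⟩, (show y = f x from hyfx).symm⟩
  · exact ⟨c, ⟨hxc, relTrans_gRel_s3 _ _ y _ (subset_gRel_s3 _ hyfc) hyx⟩, (show y = f c from hyfc).symm⟩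

end GRelClass

section Chains

variable {X : Type*}

def chainStep (f : X → X) (O : Set X) (V : Set (X × X)) : Set (X × X) :=
  {p | p.1 ∈ O ∧ p.2 ∈ O ∧ (f p.1, p.2) ∈ V}

theorem orbitRel_chainStep_map {f : X → X} {O O' : Set X} {V W : Set (X × X)}
    (hW : ∀ ⦃a a' b b'⦄, (a, a') ∈ W → (f a, b) ∈ W → (b, b') ∈ W → (f a', b') ∈ V)
    {e : X → X} (he : ∀ a ∈ O, e a ∈ O' ∧ (a, e a) ∈ W) {p q : X}
    (hpq : (p, q) ∈ orbitRel (chainStep f O W)) : (e p, e q) ∈ orbitRel (chainStep f O' V) :=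
  orbitRel_map (by
    rintro a b ⟨ha, hb, hab⟩
    exact ⟨(he a ha).1, (he b hb).1, hW (he a ha).2 hab (he b hb).2⟩) hpq

theorem orbitRel_chainStep_of_perturb_ends {f : X → X} {O : Set X} {V W : Set (X × X)}
    (hW : ∀ ⦃a a' b b'⦄, (a, a') ∈ W → (f a, b) ∈ W → (b, b') ∈ W → (f a', b') ∈ V)
    (hWrefl : diagonal X ⊆ W) {p q p' q' : X} (hp : p ∈ O) (hq : q ∈ O) (hpp' : (p', p) ∈ W)
    (hqq' : (q', q) ∈ W) (hpq : p' = q' → p = q)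
    (h : (p', q') ∈ orbitRel (chainStep f O W)) : (p, q) ∈ orbitRel (chainStep f O V) := by
  classical
  let e a := if a = p' then p else if a = q' then q else a
  have he : ∀ a ∈ O, e a ∈ O ∧ (a, e a) ∈ W := by
    intro a ha
    simp only [e]
    split_ifs with hap haq
    · exact ⟨hp, hap ▸ hpp'⟩
    · exact ⟨hq, haq ▸ hqq'⟩
    · exact ⟨ha, hWrefl (mem_diagonal a)⟩
  have heq : e q' = q := by
    by_cases hqp : q' = p'
    · simp [e, hqp, hpq hqp.symm]
    · simp [e, hqp]
  simpa [e, heq] using orbitRel_chainStep_map hW he h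

end Chains

section IntervalChains

variable {X : Type*} [TopologicalSpace X]

def intervalChainRel (f : X → X) (R : Set (X × X)) : Set (X × X) :=
  {p | p ∈ R ∧ ∀ O, IsOpen O → p.1 ∈ O → p.2 ∈ O → relInterval R p.1 p.2 ⊆ O →
    ∀ V ∈ 𝓝ˢ (diagonal X), p ∈ orbitRel (chainStep f O V)}

variable {f : X → X} {R : Set (X × X)}

theorem graphRel_subset_intervalChainRel (hfR : graphRel f ⊆ R) :
    graphRel f ⊆ intervalChainRel f R := by
  rintro ⟨p, q⟩ (rfl : q = f p)
  exact ⟨hfR rfl, fun O _ hp hfp _ V hV =>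
    subset_orbitRel _ ⟨hp, hfp, subset_of_mem_nhdsSet hV (mem_diagonal (f p))⟩⟩

theorem relTrans_intervalChainRel (hR : RelTrans R) : RelTrans (intervalChainRel f R) := by
  rintro p q r ⟨hpq, hpq'⟩ ⟨hqr, hqr'⟩
  refine ⟨hR p q r hpq hqr, fun O hO hp hr hI V hV => relTrans_orbitRel _ p q r ?_ ?_⟩
  · exact hpq' O hO hp (hI ⟨hpq, hqr⟩) ((relInterval_subset_right hR hqr).trans hI) V hV
  · exact hqr' O hO (hI ⟨hpq, hqr⟩) hr ((relInterval_subset_left hR hpq).trans hI) V hV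

variable [CompactSpace X] [T2Space X]

theorem exists_isOpen_perturbation (hf : Continuous f) {V : Set (X × X)}
    (hV : V ∈ 𝓝ˢ (diagonal X)) :
    ∃ W ∈ 𝓝ˢ (diagonal X), IsOpen W ∧
      ∀ ⦃a a' b b'⦄, (a, a') ∈ W → (f a, b) ∈ W → (b, b') ∈ W → (f a', b') ∈ V := by
  let _ := uniformSpaceOfCompactR1 (γ := X)
  rw [nhdsSet_diagonal_eq_uniformity] at hV ⊢
  obtain ⟨U, hU, hUsymm, hUV⟩ := comp_comp_symm_mem_uniformity_sets hV
  have hfU : {p : X × X | (f p.1, f p.2) ∈ U} ∈ 𝓤 X :=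
    CompactSpace.uniformContinuous_of_continuous hf hU
  obtain ⟨W, hW, hWo, -, hWU⟩ := comp_open_symm_mem_uniformity_sets (inter_mem hU hfU)
  replace hWU := (subset_comp_self_of_mem_uniformity hW).trans hWU
  refine ⟨W, hW, hWo, fun a a' b b' haa' hab hbb' => hUV ?_⟩
  exact SetRel.mem_comp.2 ⟨b, SetRel.mem_comp.2 ⟨f a, hUsymm.symm _ _ (hWU haa').2, (hWU hab).1⟩,
    (hWU hbb').1⟩

theorem isClosed_intervalChainRel (hf : Continuous f) (hR : IsClosed R) :
    IsClosed (intervalChainRel f R) := by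
  refine isClosed_of_closure_subset fun ⟨p, q⟩ hpq => ⟨closure_minimal (fun _ h => h.1) hR hpq, ?_⟩
  intro O hO hp hq hI V hV
  obtain ⟨W, hW, hWo, hWV⟩ := exists_isOpen_perturbation hf hV
  have hnear : ∀ a ∈ O, ∀ᶠ a' in 𝓝 a, a' ∈ O ∧ (a', a) ∈ W := fun a ha =>
    (hO.inter (hWo.preimage (by fun_prop))).mem_nhds ⟨ha, subset_of_mem_nhdsSet hW (mem_diagonal a)⟩
  have hdiag : ∀ᶠ r : X × X in 𝓝 (p, q), r.1 = r.2 → p = q := by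
    by_cases h : p = q
    · exact Eventually.of_forall fun _ _ => h
    · filter_upwards [isClosed_diagonal.isOpen_compl.mem_nhds (show (p, q) ∈ (diagonal X)ᶜ from h)]
        with r hr hr' using absurd hr' hr
  obtain ⟨⟨p', q'⟩, ⟨⟨hI', ⟨hp', hpp'⟩, hq', hqq'⟩, hdiag'⟩, hmem⟩ :=
    (((eventually_relInterval_subset hR hO hI).and ((hnear p hp).prod_nhds (hnear q hq))).and
      hdiag |>.and_frequently (mem_closure_iff_frequently.1 hpq)).exists
  exact orbitRel_chainStep_of_perturb_ends hWV (subset_of_mem_nhdsSet hW) hp hq hpp' hqq' hdiag'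
    (hmem.2 O hO hp' hq' hI' W hW)

theorem gRel_graphRel_subset_intervalChainRel (hf : Continuous f) :
    gRel (graphRel f) ⊆ intervalChainRel f (gRel (graphRel f)) :=
  gRel_subset (graphRel_subset_intervalChainRel (subset_gRel_s3 _))
    (isClosed_intervalChainRel hf (isClosed_gRel_s3 _)) (relTrans_intervalChainRel (relTrans_gRel_s3 _))

theorem mem_chainRel_of_mem_intervalChainRel (hf : Continuous f) {E : Set X}
    (hfE : MapsTo f E E) {p q : X} (h : (p, q) ∈ intervalChainRel f R) (hp : p ∈ E) (hq : q ∈ E)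
    (hI : relInterval R p q ⊆ E) : (p, q) ∈ chainRel (graphRel f ∩ E ×ˢ E) := by
  classical
  refine mem_iInter₂.2 fun V hV => ?_
  obtain ⟨W, hW, hWo, hWV⟩ := exists_isOpen_perturbation hf hV
  have hWrefl : ∀ a, (a, a) ∈ W := fun a => subset_of_mem_nhdsSet hW (mem_diagonal a)
  set O := ⋃ s ∈ E, {a | (a, s) ∈ W}
  have hO : IsOpen O := isOpen_biUnion fun s _ => hWo.preimage (by fun_prop)
  have hEO : E ⊆ O := fun s hs => mem_iUnion₂.2 ⟨s, hs, hWrefl s⟩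
  choose! anchor hanchorE hanchorW using fun a (ha : a ∈ O) => mem_iUnion₂.1 ha
  let e a := if a ∈ E then a else anchor a
  have he : ∀ a ∈ O, e a ∈ E ∧ (a, e a) ∈ W := by
    intro a ha
    simp only [e]
    split_ifs with haE
    · exact ⟨haE, hWrefl a⟩
    · exact ⟨hanchorE a ha, hanchorW a ha⟩
  have hstep : chainStep f E V ⊆ relComp V (graphRel f ∩ E ×ˢ E) :=
    fun ⟨a, _⟩ ⟨ha, _, hab⟩ => ⟨f a, ⟨rfl, ha, hfE ha⟩, hab⟩
  have hchain := orbitRel_chainStep_map hWV he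
    (h.2 O hO (hEO hp) (hEO hq) (hI.trans hEO) W hW)
  simp only [e, if_pos hp, if_pos hq] at hchain
  exact orbitRel_mono hstep hchain

end IntervalChains

/-- Let `f` be a continuous self-map of a compact Hausdorff space `X`
and `x ∈ X` with `(x,x) ∈ 𝒢f` (for the graph of `f`).  Then the equivalence class
`E = {y | (x,y) ∈ 𝒢f ∧ (y,x) ∈ 𝒢f}` is closed, `f(E) = E`, and the restriction of
`f` to `E` is chain transitive: `𝒞(graph f ∩ (E × E)) = E × E`. -/
theorem chainTransitive_on_gRel_class
    {X : Type*} [TopologicalSpace X] [CompactSpace X] [T2Space X]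
    (f : X → X) (hf : Continuous f) (x : X)
    (G : Set (X × X)) (hG : G = gRel {p : X × X | p.2 = f p.1})
    (hx : (x, x) ∈ G)
    (E : Set X) (hE : E = {y : X | (x, y) ∈ G ∧ (y, x) ∈ G}) :
    IsClosed E ∧ f '' E = E ∧
      chainRel ({p : X × X | p.2 = f p.1} ∩ E ×ˢ E) = E ×ˢ E := by
  subst hG hE
  have hfE : MapsTo f (gRelClass (graphRel f) x) (gRelClass (graphRel f) x) :=
    mapsTo_gRelClass hf hx
  refine ⟨isClosed_gRelClass _ x, (surjOn_gRelClass hf hx).image_eq_of_mapsTo hfE, ?_⟩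
  refine (chainRel_subset_prod (isClosed_gRelClass _ x) inter_subset_right).antisymm ?_
  rintro ⟨y, z⟩ ⟨hy, hz⟩
  exact mem_chainRel_of_mem_intervalChainRel hf hfE
    (gRel_graphRel_subset_intervalChainRel hf (relTrans_gRel_s3 _ y x z hy.2 hz.1)) hy hz
    (relInterval_subset_gRelClass hy hz)
end
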